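/- arXiv:2308.15478 — 3 statements merged into one kernel-verified Lean document; each statement's English description precedes it below -/
import Mathlib

section
/- Let ω be an admissible penalty. Let N, C, P be positive integers, let Φ_1, …, Φ_N be real C×P matrices and y_1, …, y_N ∈ ℝ^C, and suppose there exists β ∈ ℝ^P with Φ_i β = y_i for all i. Then the infimum of Ω_ω(M) + ‖θ‖₂² over all P×P real matrices M and vectors θ ∈ ℝ^P satisfying Φ_i M θ = y_i for all i equals the infimum of ω̃(‖β‖₂) over all β ∈ ℝ^P satisfying Φ_i β = y_i for all i. -/
/-!
Both problems are governed by the scalar trade-off `ω z + ‖β‖² / z²`. Stretching by `z` along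
the direction `u` of `β`, i.e. `M = 1 + (z - 1) u uᵀ` with `θ = β / z`, attains it exactly:
`Mᵀ M` has the eigenvalue `z²` once and `1` otherwise, so `Ω_ω(M) = ω z`. Conversely, if `s` is
the largest singular value of `M`, then `‖M θ‖ ≤ s ‖θ‖` and `ω s ≤ Ω_ω(M)`, so testing `z = s`
(or `z = 1` when `s < 1`) in the infimum defining `ω̃` bounds `ω̃(‖M θ‖)` by `Ω_ω(M) + ‖θ‖²`.
-/

open Matrix Set

noncomputable section

/-- An admissible penalty: nonnegative, minimized at `ω 1 = 0`, strictly decreasing on `(0,1]`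
and strictly increasing on `[1,∞)`. -/
def Admissible (ω : ℝ → ℝ) : Prop :=
  (∀ x, 0 ≤ ω x) ∧ ω 1 = 0 ∧ StrictAntiOn ω (Set.Ioc 0 1) ∧ StrictMonoOn ω (Set.Ici 1)

/-- The scalar effective penalty `ω̃ v = inf_{z ≥ 1} (ω z + v² / z²)`. -/
def effPenalty (ω : ℝ → ℝ) (v : ℝ) : ℝ :=
  sInf ((fun z => ω z + v ^ 2 / z ^ 2) '' Set.Ici (1 : ℝ))

/-- The joint penalty `(ω₁ ⊕ ω₂) v = inf_{1 ≤ z ≤ v} (ω₁ z + ω₂ (v / z))`. -/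
def jointPenalty (ω₁ ω₂ : ℝ → ℝ) (v : ℝ) : ℝ :=
  sInf ((fun z => ω₁ z + ω₂ (v / z)) '' Set.Icc (1 : ℝ) v)

/-- The (unordered) singular values of a real `P × Q` matrix: square roots of the
eigenvalues of `Xᴴ X`. -/
def svals {P Q : ℕ} (X : Matrix (Fin P) (Fin Q) ℝ) (j : Fin Q) : ℝ :=
  Real.sqrt ((Matrix.isHermitian_conjTranspose_mul_self X).eigenvalues j)

/-- Singular values sorted in decreasing order: `svalsDesc X j` is the `j`-th largest
singular value of `X`. -/
def svalsDesc {P Q : ℕ} (X : Matrix (Fin P) (Fin Q) ℝ) (j : Fin Q) : ℝ :=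
  svals X (Tuple.sort (fun i => - svals X i) j)

/-- The spectral penalty `Ω_ω M = Σ_j ω (σ_j M)`. -/
def specPenalty (ω : ℝ → ℝ) {P : ℕ} (M : Matrix (Fin P) (Fin P) ℝ) : ℝ :=
  ∑ j, ω (svals M j)

/-- Frobenius norm squared. -/
def frobSq {P Q : ℕ} (X : Matrix (Fin P) (Fin Q) ℝ) : ℝ :=
  ∑ i, ∑ j, X i j ^ 2

/-- Euclidean norm of a vector. -/
def enorm2 {P : ℕ} (v : Fin P → ℝ) : ℝ :=
  Real.sqrt (∑ j, v j ^ 2)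

/-- The induced effective spectral penalty `Ω̃_g B = Σ_{j=1}^{min(P,Q)} g̃(σ_j B)`. -/
def effSpec (g : ℝ → ℝ) {P Q : ℕ} (B : Matrix (Fin P) (Fin Q) ℝ) : ℝ :=
  ∑ j : Fin (min P Q), effPenalty g (svalsDesc B (Fin.castLE (min_le_right P Q) j))

namespace Matrix

variable {n : Type*} [Fintype n] [DecidableEq n]

theorem IsHermitian.eigenvalues_eq_or_eq_of_mul_eq_zero {𝕜 : Type*} [RCLike 𝕜]
    {A : Matrix n n 𝕜} (hA : A.IsHermitian) {a b : ℝ}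
    (h : (A - algebraMap ℝ _ a) * (A - algebraMap ℝ _ b) = 0) (j : n) :
    hA.eigenvalues j = a ∨ hA.eigenvalues j = b := by
  have : Nonempty n := ⟨j⟩
  have hroot := spectrum.subset_polynomial_aeval A ((Polynomial.X - Polynomial.C a) *
    (Polynomial.X - Polynomial.C b)) ⟨_, hA.eigenvalues_mem_spectrum_real j, rfl⟩
  simp only [map_mul, map_sub, Polynomial.aeval_X, Polynomial.aeval_C, h, spectrum.zero_eq,
    Set.mem_singleton_iff, Polynomial.eval_mul, Polynomial.eval_sub, Polynomial.eval_X,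
    Polynomial.eval_C, mul_eq_zero, sub_eq_zero] at hroot
  exact hroot

theorem IsHermitian.dotProduct_mulVec_le {A : Matrix n n ℝ} (hA : A.IsHermitian) {c : ℝ}
    (hc : ∀ j, hA.eigenvalues j ≤ c) (x : n → ℝ) : x ⬝ᵥ (A *ᵥ x) ≤ c * (x ⬝ᵥ x) := by
  have hB : (algebraMap ℝ _ c - A).IsHermitian :=
    (IsSelfAdjoint.algebraMap _ (IsSelfAdjoint.all c)).sub hA
  have hpsd : (algebraMap ℝ _ c - A).PosSemidef := by
    refine hB.posSemidef_iff_eigenvalues_nonneg.mpr fun j => ?_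
    have hmem := hB.eigenvalues_mem_spectrum_real j
    rw [← spectrum.singleton_sub_eq, hA.spectrum_real_eq_range_eigenvalues] at hmem
    obtain ⟨_, rfl, _, ⟨i, rfl⟩, hi⟩ := hmem
    simpa [← hi] using hc i
  have := hpsd.dotProduct_mulVec_nonneg x
  simp only [star_trivial, sub_mulVec, dotProduct_sub, Algebra.algebraMap_eq_smul_one,
    smul_mulVec, one_mulVec, dotProduct_smul, smul_eq_mul] at this
  linarith

end Matrix

section Stretch

variable {n : Type*} [DecidableEq n] {u : n → ℝ}

def stretchAlong (u : n → ℝ) (z : ℝ) : Matrix n n ℝ :=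
  1 + (z - 1) • vecMulVec u u

theorem transpose_stretchAlong (u : n → ℝ) (z : ℝ) :
    (stretchAlong u z)ᵀ = stretchAlong u z := by
  simp [stretchAlong, transpose_vecMulVec]

variable [Fintype n]

theorem stretchAlong_mulVec_self (hu : u ⬝ᵥ u = 1) (z : ℝ) :
    stretchAlong u z *ᵥ u = z • u := by
  simp only [stretchAlong, add_mulVec, one_mulVec, smul_mulVec, vecMulVec_mulVec, hu,
    op_smul_eq_smul, one_smul]
  module

theorem stretchAlong_mul_stretchAlong (hu : u ⬝ᵥ u = 1) (a b : ℝ) :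
    stretchAlong u a * stretchAlong u b = stretchAlong u (a * b) := by
  simp only [stretchAlong, add_mul, mul_add, one_mul, mul_one, smul_mul_smul,
    vecMulVec_mul_vecMulVec, hu, one_smul]
  module

theorem trace_stretchAlong (hu : u ⬝ᵥ u = 1) (z : ℝ) :
    (stretchAlong u z).trace = Fintype.card n + (z - 1) := by
  simp [stretchAlong, hu]

theorem Matrix.IsHermitian.eigenvalues_stretchAlong {z : ℝ} (hu : u ⬝ᵥ u = 1)
    (hS : (stretchAlong u z).IsHermitian) (j : n) :
    hS.eigenvalues j = 1 ∨ hS.eigenvalues j = z := by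
  refine hS.eigenvalues_eq_or_eq_of_mul_eq_zero ?_ j
  have hproj : vecMulVec u u * vecMulVec u u = vecMulVec u u := by
    rw [vecMulVec_mul_vecMulVec, hu, one_smul]
  have h1 : stretchAlong u z - (1 : ℝ) • 1 = (z - 1) • vecMulVec u u := by
    rw [stretchAlong]; module
  have hz : stretchAlong u z - z • 1 = (z - 1) • (vecMulVec u u - 1) := by
    rw [stretchAlong]; module
  rw [Algebra.algebraMap_eq_smul_one, Algebra.algebraMap_eq_smul_one, h1, hz, smul_mul_smul,
    mul_sub (vecMulVec u u), hproj, mul_one, sub_self, smul_zero]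

end Stretch

section SpectralPenalty

variable {P : ℕ}

theorem specPenalty_eq_of_conjTranspose_mul_self_eq (ω : ℝ → ℝ)
    {M B : Matrix (Fin P) (Fin P) ℝ} (hMB : Mᴴ * M = B) (hB : B.IsHermitian) :
    specPenalty ω M = ∑ j, ω √(hB.eigenvalues j) := by
  subst hMB; rfl

theorem specPenalty_stretchAlong {ω : ℝ → ℝ} (hω1 : ω 1 = 0) {u : Fin P → ℝ}
    (hu : u ⬝ᵥ u = 1) {z : ℝ} (hz : 0 ≤ z) : specPenalty ω (stretchAlong u z) = ω z := by
  have hS : (stretchAlong u (z ^ 2)).IsHermitian := transpose_stretchAlong u _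
  rw [specPenalty_eq_of_conjTranspose_mul_self_eq ω (by rw [conjTranspose_eq_transpose_of_trivial,
    transpose_stretchAlong, stretchAlong_mul_stretchAlong hu, sq]) hS]
  have he := hS.eigenvalues_stretchAlong hu
  rcases eq_or_ne z 1 with hz1 | hz1
  · rw [show ω z = 0 by rw [hz1, hω1]]
    refine Finset.sum_eq_zero fun j _ => ?_
    rcases he j with h | h <;> rw [h] <;> simp [hz1, hω1]
  -- on the two possible eigenvalues `1` and `z ^ 2` the summand is affine in the eigenvalue,
  -- so the sum is determined by the trace
  have key : ∀ j, ω √(hS.eigenvalues j) * (z ^ 2 - 1) = ω z * (hS.eigenvalues j - 1) := by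
    intro j
    rcases he j with h | h <;> simp [h, hω1, Real.sqrt_sq hz]
  have hsum : ∑ j, hS.eigenvalues j = (P : ℝ) + (z ^ 2 - 1) := by
    simpa [trace_stretchAlong hu] using hS.trace_eq_sum_eigenvalues.symm
  have hz2 : z ^ 2 - 1 ≠ 0 := by
    intro h
    exact hz1 (by nlinarith)
  apply mul_right_cancel₀ hz2
  rw [Finset.sum_mul, Finset.sum_congr rfl fun j _ => key j, ← Finset.mul_sum,
    Finset.sum_sub_distrib, hsum]
  simp

end SpectralPenalty

section EffectivePenalty

variable {ω : ℝ → ℝ}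

theorem effPenalty_le (hω : ∀ x, 0 ≤ ω x) (v : ℝ) {z : ℝ} (hz : 1 ≤ z) :
    effPenalty ω v ≤ ω z + v ^ 2 / z ^ 2 :=
  csInf_le ⟨0, by rintro _ ⟨x, -, rfl⟩; exact add_nonneg (hω x) (by positivity)⟩ ⟨z, hz, rfl⟩

theorem le_effPenalty {c v : ℝ} (h : ∀ z, 1 ≤ z → c ≤ ω z + v ^ 2 / z ^ 2) :
    c ≤ effPenalty ω v :=
  le_csInf ⟨_, 1, Set.self_mem_Ici, rfl⟩ (by rintro _ ⟨z, hz, rfl⟩; exact h z hz)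

theorem effPenalty_nonneg (hω : ∀ x, 0 ≤ ω x) (v : ℝ) : 0 ≤ effPenalty ω v :=
  le_effPenalty fun z _ => add_nonneg (hω z) (by positivity)

end EffectivePenalty

section Equivalence

variable {P : ℕ} {ω : ℝ → ℝ}

theorem sq_enorm2 (v : Fin P → ℝ) : enorm2 v ^ 2 = v ⬝ᵥ v := by
  rw [enorm2, Real.sq_sqrt (by positivity)]
  simp [dotProduct, sq]

theorem specPenalty_nonneg (hω : ∀ x, 0 ≤ ω x) (M : Matrix (Fin P) (Fin P) ℝ) :
    0 ≤ specPenalty ω M :=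
  Finset.sum_nonneg fun _ _ => hω _

theorem sq_enorm2_mulVec_le {m : ℕ} (M : Matrix (Fin m) (Fin P) ℝ) {j : Fin P}
    (hj : ∀ i, (isHermitian_conjTranspose_mul_self M).eigenvalues i ≤
      (isHermitian_conjTranspose_mul_self M).eigenvalues j) (θ : Fin P → ℝ) :
    enorm2 (M *ᵥ θ) ^ 2 ≤ svals M j ^ 2 * enorm2 θ ^ 2 := by
  have hgram : (M *ᵥ θ) ⬝ᵥ (M *ᵥ θ) = θ ⬝ᵥ ((Mᴴ * M) *ᵥ θ) := by
    rw [conjTranspose_eq_transpose_of_trivial, ← mulVec_mulVec, mulVec_transpose,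
      dotProduct_mulVec, dotProduct_comm]
  rw [sq_enorm2, sq_enorm2, hgram, svals,
    Real.sq_sqrt (eigenvalues_conjTranspose_mul_self_nonneg M j)]
  exact (isHermitian_conjTranspose_mul_self M).dotProduct_mulVec_le hj θ

theorem exists_dotProduct_self_eq_one_and_smul_eq (hP : 0 < P) (β : Fin P → ℝ) :
    ∃ u : Fin P → ℝ, u ⬝ᵥ u = 1 ∧ enorm2 β • u = β := by
  by_cases hβ : enorm2 β = 0
  · refine ⟨Pi.single ⟨0, hP⟩ 1, by simp, ?_⟩
    rw [hβ, zero_smul, eq_comm, ← dotProduct_self_eq_zero, ← sq_enorm2, hβ, sq, mul_zero]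
  · refine ⟨(enorm2 β)⁻¹ • β, ?_, smul_inv_smul₀ hβ β⟩
    rw [dotProduct_smul, smul_dotProduct, ← sq_enorm2, smul_eq_mul, smul_eq_mul]
    field_simp

theorem exists_mulVec_eq_and_specPenalty_add_eq (hω1 : ω 1 = 0) (hP : 0 < P)
    (β : Fin P → ℝ) {z : ℝ} (hz : 0 < z) :
    ∃ (M : Matrix (Fin P) (Fin P) ℝ) (θ : Fin P → ℝ),
      M *ᵥ θ = β ∧ specPenalty ω M + enorm2 θ ^ 2 = ω z + enorm2 β ^ 2 / z ^ 2 := by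
  obtain ⟨u, hu, hβ⟩ := exists_dotProduct_self_eq_one_and_smul_eq hP β
  refine ⟨stretchAlong u z, z⁻¹ • β, ?_, ?_⟩
  · rw [← hβ, mulVec_smul, mulVec_smul, stretchAlong_mulVec_self hu, smul_comm z⁻¹,
      inv_smul_smul₀ hz.ne']
  · rw [specPenalty_stretchAlong hω1 hu hz.le, sq_enorm2, sq_enorm2, dotProduct_smul,
      smul_dotProduct, smul_eq_mul, smul_eq_mul]
    field_simp

theorem effPenalty_enorm2_mulVec_le (hω : Admissible ω) (hP : 0 < P)
    (M : Matrix (Fin P) (Fin P) ℝ) (θ : Fin P → ℝ) :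
    effPenalty ω (enorm2 (M *ᵥ θ)) ≤ specPenalty ω M + enorm2 θ ^ 2 := by
  obtain ⟨j, -, hj⟩ := Finset.exists_max_image Finset.univ
    (isHermitian_conjTranspose_mul_self M).eigenvalues ⟨⟨0, hP⟩, Finset.mem_univ _⟩
  have hMθ := sq_enorm2_mulVec_le M (fun i => hj i (Finset.mem_univ i)) θ
  have hωs : ω (svals M j) ≤ specPenalty ω M :=
    Finset.single_le_sum (f := fun i => ω (svals M i)) (fun i _ => hω.1 _) (Finset.mem_univ j)
  have hs0 : 0 ≤ svals M j := Real.sqrt_nonneg _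
  rcases le_or_gt 1 (svals M j) with hs | hs
  · calc effPenalty ω (enorm2 (M *ᵥ θ))
        ≤ ω (svals M j) + enorm2 (M *ᵥ θ) ^ 2 / svals M j ^ 2 := effPenalty_le hω.1 _ hs
      _ ≤ specPenalty ω M + enorm2 θ ^ 2 := by
        gcongr
        rw [div_le_iff₀ (by positivity)]
        linarith
  · calc effPenalty ω (enorm2 (M *ᵥ θ))
        ≤ ω 1 + enorm2 (M *ᵥ θ) ^ 2 / 1 ^ 2 := effPenalty_le hω.1 _ le_rfl
      _ = enorm2 (M *ᵥ θ) ^ 2 := by rw [hω.2.1]; simp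
      _ ≤ svals M j ^ 2 * enorm2 θ ^ 2 := hMθ
      _ ≤ 1 * enorm2 θ ^ 2 := by gcongr; nlinarith
      _ ≤ specPenalty ω M + enorm2 θ ^ 2 := by linarith [specPenalty_nonneg hω.1 M]

end Equivalence

theorem structureless_equivalent_optimization_general
    {N C P : ℕ} (hP : 0 < P)
    (ω : ℝ → ℝ) (hω : Admissible ω)
    (Φ : Fin N → Matrix (Fin C) (Fin P) ℝ) (y : Fin N → Fin C → ℝ)
    (hfeas : ∃ β : Fin P → ℝ, ∀ i, (Φ i) *ᵥ β = y i) :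
    sInf {v : ℝ | ∃ (M : Matrix (Fin P) (Fin P) ℝ) (θ : Fin P → ℝ),
        (∀ i, (Φ i) *ᵥ (M *ᵥ θ) = y i) ∧ v = specPenalty ω M + (enorm2 θ) ^ 2} =
    sInf {v : ℝ | ∃ β : Fin P → ℝ, (∀ i, (Φ i) *ᵥ β = y i) ∧
        v = effPenalty ω (enorm2 β)} := by
  obtain ⟨β₀, hβ₀⟩ := hfeas
  have hbdd_lifted : BddBelow {v : ℝ | ∃ (M : Matrix (Fin P) (Fin P) ℝ) (θ : Fin P → ℝ),
      (∀ i, (Φ i) *ᵥ (M *ᵥ θ) = y i) ∧ v = specPenalty ω M + (enorm2 θ) ^ 2} :=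
    ⟨0, by rintro _ ⟨M, θ, -, rfl⟩; exact add_nonneg (specPenalty_nonneg hω.1 M) (sq_nonneg _)⟩
  have hbdd_reduced : BddBelow {v : ℝ | ∃ β : Fin P → ℝ, (∀ i, (Φ i) *ᵥ β = y i) ∧
      v = effPenalty ω (enorm2 β)} :=
    ⟨0, by rintro _ ⟨β, -, rfl⟩; exact effPenalty_nonneg hω.1 _⟩
  apply le_antisymm
  · refine le_csInf ⟨_, β₀, hβ₀, rfl⟩ ?_
    rintro _ ⟨β, hβ, rfl⟩
    refine le_effPenalty fun z hz => ?_
    obtain ⟨M, θ, hMθ, hval⟩ :=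
      exists_mulVec_eq_and_specPenalty_add_eq hω.2.1 hP β (zero_lt_one.trans_le hz)
    exact csInf_le hbdd_lifted ⟨M, θ, fun i => hMθ ▸ hβ i, hval.symm⟩
  · refine le_csInf ⟨_, 1, β₀, by simpa using hβ₀, rfl⟩ ?_
    rintro _ ⟨M, θ, h, rfl⟩
    exact (csInf_le hbdd_reduced ⟨_, h, rfl⟩).trans (effPenalty_enorm2_mulVec_le hω hP M θ)

/-- The structureless adaptive feature learning problem over `(M, θ)` with
spectral penalty `Ω_ω(M) + ‖θ‖₂²` has the same optimal value as the linearly constrained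
problem over `β` with effective penalty `ω̃(‖β‖₂)`. -/
theorem structureless_equivalent_optimization
    {N C P : ℕ} (hN : 0 < N) (hC : 0 < C) (hP : 0 < P)
    (ω : ℝ → ℝ) (hω : Admissible ω)
    (Φ : Fin N → Matrix (Fin C) (Fin P) ℝ) (y : Fin N → Fin C → ℝ)
    (hfeas : ∃ β : Fin P → ℝ, ∀ i, (Φ i) *ᵥ β = y i) :
    sInf {v : ℝ | ∃ (M : Matrix (Fin P) (Fin P) ℝ) (θ : Fin P → ℝ),
        (∀ i, (Φ i) *ᵥ (M *ᵥ θ) = y i) ∧ v = specPenalty ω M + (enorm2 θ) ^ 2} =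
    sInf {v : ℝ | ∃ β : Fin P → ℝ, (∀ i, (Φ i) *ᵥ β = y i) ∧
        v = effPenalty ω (enorm2 β)} :=
  structureless_equivalent_optimization_general hP ω hω Φ y hfeas

end
end

section
/- Let ω₁ and ω₂ be admissible penalties that are continuous. Then the joint penalty ω₁ ⊕ ω₂ satisfies (ω₁ ⊕ ω₂)(1) = 0 and is strictly increasing on [1, ∞): for all 1 ≤ v₁ < v₂, (ω₁ ⊕ ω₂)(v₁) < (ω₁ ⊕ ω₂)(v₂). -/
open Matrix Set

noncomputable section

/-!
The infimum defining `(ω₁ ⊕ ω₂) v₂` is attained at some `z ∈ [1, v₂]` by compactness.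
For `v₁ < v₂`, if `z ≤ v₁` then `z` is feasible for `v₁` and `ω₂ (v₁ / z) < ω₂ (v₂ / z)`;
otherwise `v₁` is feasible for `v₁`, with value `ω₁ v₁ < ω₁ z`.
-/

section JointPenalty

variable {ω₁ ω₂ : ℝ → ℝ}

theorem jointPenalty_one (h₁ : ω₁ 1 = 0) (h₂ : ω₂ 1 = 0) : jointPenalty ω₁ ω₂ 1 = 0 := by
  simp [jointPenalty, h₁, h₂]

theorem jointPenalty_le (h₁ : ∀ x, 0 ≤ ω₁ x) (h₂ : ∀ x, 0 ≤ ω₂ x) {v z : ℝ}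
    (hz : z ∈ Icc 1 v) : jointPenalty ω₁ ω₂ v ≤ ω₁ z + ω₂ (v / z) :=
  csInf_le ⟨0, by rintro _ ⟨w, -, rfl⟩; exact add_nonneg (h₁ w) (h₂ _)⟩ ⟨z, hz, rfl⟩

theorem exists_jointPenalty_eq (hc₁ : Continuous ω₁) (hc₂ : Continuous ω₂) {v : ℝ}
    (hv : 1 ≤ v) : ∃ z ∈ Icc 1 v, jointPenalty ω₁ ω₂ v = ω₁ z + ω₂ (v / z) := by
  have hcont : ContinuousOn (fun z => ω₁ z + ω₂ (v / z)) (Icc 1 v) :=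
    hc₁.continuousOn.add <| hc₂.comp_continuousOn <|
      continuousOn_const.div continuousOn_id fun z hz => (zero_lt_one.trans_le hz.1).ne'
  exact isCompact_Icc.exists_sInf_image_eq ⟨1, le_rfl, hv⟩ hcont

theorem jointPenalty_lt (h₁ : ∀ x, 0 ≤ ω₁ x) (h₂ : ∀ x, 0 ≤ ω₂ x) (h₂₁ : ω₂ 1 = 0)
    (hm₁ : StrictMonoOn ω₁ (Ici 1)) (hm₂ : StrictMonoOn ω₂ (Ici 1))
    {v₁ v₂ z : ℝ} (hv₁ : 1 ≤ v₁) (hlt : v₁ < v₂) (hz : z ∈ Icc 1 v₂) :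
    jointPenalty ω₁ ω₂ v₁ < ω₁ z + ω₂ (v₂ / z) := by
  have hz₀ : 0 < z := zero_lt_one.trans_le hz.1
  rcases le_or_gt z v₁ with hzv | hvz
  · have hq : 1 ≤ v₁ / z := (one_le_div hz₀).mpr hzv
    have hdiv : v₁ / z < v₂ / z := div_lt_div_of_pos_right hlt hz₀
    calc jointPenalty ω₁ ω₂ v₁ ≤ ω₁ z + ω₂ (v₁ / z) := jointPenalty_le h₁ h₂ ⟨hz.1, hzv⟩
      _ < ω₁ z + ω₂ (v₂ / z) := by
        gcongr
        exact hm₂ (mem_Ici.mpr hq) (mem_Ici.mpr (hq.trans hdiv.le)) hdiv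
  · calc jointPenalty ω₁ ω₂ v₁ ≤ ω₁ v₁ + ω₂ (v₁ / v₁) := jointPenalty_le h₁ h₂ ⟨hv₁, le_rfl⟩
      _ = ω₁ v₁ := by rw [div_self (by positivity), h₂₁, add_zero]
      _ < ω₁ z := hm₁ (mem_Ici.mpr hv₁) (mem_Ici.mpr hz.1) hvz
      _ ≤ ω₁ z + ω₂ (v₂ / z) := le_add_of_nonneg_right (h₂ _)

end JointPenalty

/-- Proposition 2 of the paper. The joint penalty of two continuous admissible
penalties vanishes at `1` and is strictly increasing on `[1, ∞)`. -/
theorem jointPenalty_strictMono (ω₁ ω₂ : ℝ → ℝ)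
    (hω₁ : Admissible ω₁) (hω₂ : Admissible ω₂)
    (hc₁ : Continuous ω₁) (hc₂ : Continuous ω₂) :
    jointPenalty ω₁ ω₂ 1 = 0 ∧
    ∀ v₁ v₂ : ℝ, 1 ≤ v₁ → v₁ < v₂ → jointPenalty ω₁ ω₂ v₁ < jointPenalty ω₁ ω₂ v₂ := by
  obtain ⟨h₁, h₁₁, -, hm₁⟩ := hω₁
  obtain ⟨h₂, h₂₁, -, hm₂⟩ := hω₂
  refine ⟨jointPenalty_one h₁₁ h₂₁, fun v₁ v₂ hv₁ hlt => ?_⟩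
  obtain ⟨z, hz, hv₂⟩ := exists_jointPenalty_eq hc₁ hc₂ (hv₁.trans hlt.le)
  rw [hv₂]
  exact jointPenalty_lt h₁ h₂ h₂₁ hm₁ hm₂ hv₁ hlt hz
end
end

section
/- Let M be a real P×P matrix with singular value decomposition M = U S Vᵀ, where U and V are P×P orthogonal matrices and S is diagonal with nonnegative entries, and let θ ∈ ℝ^P. Define M' = U S Uᵀ and θ' = U Vᵀ θ. Then M' θ' = M θ, ‖θ'‖₂ = ‖θ‖₂, M' is symmetric positive semidefinite, and M' has the same singular values as M (hence Ω_ω(M') = Ω_ω(M) for any penalty ω applied to singular values). Therefore the joint optimization over (M, θ) may be restricted to symmetric positive semidefinite M without loss of generality. -/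
open Matrix Set

noncomputable section

/-! Both Gram matrices `M'ᵀM' = U S² Uᵀ` and `MᵀM = V S² Vᵀ` are orthogonally similar to `S²`,
so they have the same characteristic polynomial, hence the same eigenvalues and the same singular
values. The rest is cancelling `Uᵀ U = 1`. -/

theorem Matrix.charpoly_mul_mul_of_mul_eq_one {n R : Type*} [Fintype n] [DecidableEq n]
    [CommRing R] (A W W' : Matrix n n R) (hW : W' * W = 1) :
    (W * A * W').charpoly = A.charpoly := by
  rw [charpoly_mul_comm, ← Matrix.mul_assoc, hW, Matrix.one_mul]

theorem svals_eq_of_charpoly_eq {P Q R : ℕ} {X : Matrix (Fin P) (Fin Q) ℝ}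
    {Y : Matrix (Fin R) (Fin Q) ℝ} (h : (Xᴴ * X).charpoly = (Yᴴ * Y).charpoly) :
    svals X = svals Y := by
  unfold svals
  rw [(IsHermitian.eigenvalues_eq_eigenvalues_iff _ _).2 h]

theorem svals_mul_mul_transpose {P Q R : ℕ} (U : Matrix (Fin R) (Fin P) ℝ)
    (A : Matrix (Fin P) (Fin Q) ℝ) (V : Matrix (Fin Q) (Fin Q) ℝ) (hU : Uᵀ * U = 1)
    (hV : Vᵀ * V = 1) : svals (U * A * Vᵀ) = svals A := by
  apply svals_eq_of_charpoly_eq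
  have hgram : (U * A * Vᵀ)ᴴ * (U * A * Vᵀ) = V * (Aᴴ * A) * Vᵀ := by
    simp only [conjTranspose_eq_transpose_of_trivial, transpose_mul, transpose_transpose]
    calc V * (Aᵀ * Uᵀ) * (U * A * Vᵀ) = V * (Aᵀ * (Uᵀ * U) * A) * Vᵀ := by
          simp only [Matrix.mul_assoc]
      _ = V * (Aᵀ * A) * Vᵀ := by rw [hU, Matrix.mul_one]
  rw [hgram, charpoly_mul_mul_of_mul_eq_one _ _ _ hV]

theorem enorm2_mulVec {P Q : ℕ} (W : Matrix (Fin Q) (Fin P) ℝ) (hW : Wᵀ * W = 1)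
    (v : Fin P → ℝ) : enorm2 (W *ᵥ v) = enorm2 v := by
  have hsq : ∀ {n : ℕ} (w : Fin n → ℝ), ∑ j, w j ^ 2 = w ⬝ᵥ w := fun w => by
    simp only [dotProduct, sq]
  unfold enorm2
  rw [hsq, hsq, dotProduct_mulVec, ← mulVec_transpose, mulVec_mulVec, hW, one_mulVec]

/-- Replacing `M = U S Vᵀ` by the symmetric positive semidefinite
`M' = U S Uᵀ` and `θ' = U Vᵀ θ` changes neither the product `Mθ`, nor `‖θ‖₂`, nor the singular
values (hence no spectral penalty), so the joint optimization may be restricted to symmetric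
positive semidefinite `M`. -/
theorem psd_without_loss_of_generality {P : ℕ} (U S V : Matrix (Fin P) (Fin P) ℝ)
    (hU : U ∈ Matrix.orthogonalGroup (Fin P) ℝ) (hV : V ∈ Matrix.orthogonalGroup (Fin P) ℝ)
    (dg : Fin P → ℝ) (hdg : ∀ i, 0 ≤ dg i) (hS : S = Matrix.diagonal dg)
    (M : Matrix (Fin P) (Fin P) ℝ) (hM : M = U * S * Vᵀ) (θ : Fin P → ℝ) :
    let M' := U * S * Uᵀ
    let θ' := U *ᵥ (Vᵀ *ᵥ θ)
    M' *ᵥ θ' = M *ᵥ θ ∧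
    enorm2 θ' = enorm2 θ ∧
    M'.PosSemidef ∧
    svalsDesc M' = svalsDesc M ∧
    ∀ ω : ℝ → ℝ, specPenalty ω M' = specPenalty ω M := by
  intro M' θ'
  have hUtU : Uᵀ * U = 1 := (mem_orthogonalGroup_iff' _ _).1 hU
  have hVtV : Vᵀ * V = 1 := (mem_orthogonalGroup_iff' _ _).1 hV
  have hsvals : svals M' = svals M := by
    rw [hM, svals_mul_mul_transpose U S U hUtU hUtU, svals_mul_mul_transpose U S V hUtU hVtV]
  refine ⟨?_, ?_, ?_, by unfold svalsDesc; rw [hsvals],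
    fun ω => by unfold specPenalty; rw [hsvals]⟩
  · calc (U * S * Uᵀ) *ᵥ (U *ᵥ (Vᵀ *ᵥ θ)) = (U * S * (Uᵀ * U) * Vᵀ) *ᵥ θ := by
          simp only [mulVec_mulVec, Matrix.mul_assoc]
      _ = M *ᵥ θ := by rw [hUtU, Matrix.mul_one, hM]
  · have hVVt : Vᵀᵀ * Vᵀ = 1 := by rw [transpose_transpose, (mem_orthogonalGroup_iff _ _).1 hV]
    rw [enorm2_mulVec U hUtU, enorm2_mulVec Vᵀ hVVt]
  · have hSpsd : S.PosSemidef := hS ▸ posSemidef_diagonal_iff.2 hdg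
    simpa only [conjTranspose_eq_transpose_of_trivial] using hSpsd.mul_mul_conjTranspose_same U
end
end
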